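/- arXiv:0706.1448 — 8 statements merged into one kernel-verified Lean document; each statement's English description precedes it below -/
import Mathlib

section
/- Let n, m be positive integers and let a, b, c, d be elements of a field K. For every t ∈ K such that a·t^{mn} − c·t^m ≠ 0 and a·t^{m(n−1)} − c ≠ 0, setting x(t) = −(b·t^{mn} − d)/(a·t^{mn} − c·t^m), y(t) = −(b·t^{mn} − d)/(a·t^{m(n−1)} − c) and z(t) = t^n, one has (x(t)^n + a·x(t) + b)·z(t)^m = y(t)^n + c·y(t) + d. (This exhibits a rational curve on the surface S¹: g₁(x)·z^m = y^n + c·y + d.) -/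
/-!
On the curve one has `y = t^m x`. Substituting `y = s x` with `s = t^m` turns the equation of `S¹`
into one that is affine in `x`, and `x(t)` is its unique root.
-/

theorem scaled_equation_sub_eq {R : Type*} [CommRing R] (n : ℕ) (a b c d s x : R) :
    (x ^ n + a * x + b) * s ^ n - ((s * x) ^ n + c * (s * x) + d) =
      (a * s ^ n - c * s) * x + (b * s ^ n - d) := by
  ring

theorem scaled_equation_of_root {K : Type*} [Field K] (n : ℕ) (a b c d s : K)
    (h : a * s ^ n - c * s ≠ 0) :
    let x : K := -((b * s ^ n - d) / (a * s ^ n - c * s))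
    (x ^ n + a * x + b) * s ^ n = (s * x) ^ n + c * (s * x) + d := by
  intro x
  rw [← sub_eq_zero, scaled_equation_sub_eq, mul_neg, mul_div_cancel₀ _ h]
  ring

theorem pow_mul_sub_eq_mul_pow_pred {R : Type*} [CommRing R] {n : ℕ} (hn : 0 < n) (m : ℕ)
    (a c t : R) :
    a * t ^ (m * n) - c * t ^ m = t ^ m * (a * t ^ (m * (n - 1)) - c) := by
  obtain ⟨k, rfl⟩ := Nat.exists_eq_add_of_lt hn
  simp only [zero_add, Nat.add_sub_cancel, mul_add, pow_add, mul_one]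
  ring

theorem rational_curve_on_S1_general (K : Type*) [Field K] (n m : ℕ) (hn : 0 < n)
    (a b c d : K) (t : K)
    (h1 : a * t ^ (m * n) - c * t ^ m ≠ 0) :
    let x : K := -((b * t ^ (m * n) - d) / (a * t ^ (m * n) - c * t ^ m))
    let y : K := -((b * t ^ (m * n) - d) / (a * t ^ (m * (n - 1)) - c))
    let z : K := t ^ n
    (x ^ n + a * x + b) * z ^ m = y ^ n + c * y + d := by
  intro x y z
  have hfactor := pow_mul_sub_eq_mul_pow_pred hn m a c t
  have hs : t ^ m ≠ 0 := left_ne_zero_of_mul (hfactor ▸ h1)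
  have hy : y = t ^ m * x := by
    simp only [y, x, hfactor, mul_neg, ← mul_div_assoc, mul_div_mul_left _ _ hs]
  have hz : z ^ m = (t ^ m) ^ n := by
    simp only [z, ← pow_mul, mul_comm]
  rw [hy, hz]
  rw [pow_mul] at h1
  simpa only [x, pow_mul] using scaled_equation_of_root n a b c d (t ^ m) h1

/-- A rational curve on the surface `S¹ : g₁(x)·z^m = y^n + c·y + d`,
where `g₁(x) = x^n + a·x + b`. -/
theorem rational_curve_on_S1 (K : Type*) [Field K] (n m : ℕ) (hn : 0 < n) (hm : 0 < m)
    (a b c d : K) (t : K)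
    (h1 : a * t ^ (m * n) - c * t ^ m ≠ 0)
    (h2 : a * t ^ (m * (n - 1)) - c ≠ 0) :
    let x : K := -((b * t ^ (m * n) - d) / (a * t ^ (m * n) - c * t ^ m))
    let y : K := -((b * t ^ (m * n) - d) / (a * t ^ (m * (n - 1)) - c))
    let z : K := t ^ n
    (x ^ n + a * x + b) * z ^ m = y ^ n + c * y + d :=
  rational_curve_on_S1_general K n m hn a b c d t h1
end

section
/- Let K be a field, let n ≥ 3 be an integer, and let a, b ∈ K with a·b ≠ 0. For every t ∈ K with t^{2n} − t² ≠ 0, setting X₁(t) = −(b/a)·(t^{2n} − 1)/(t^{2n} − t²), X₂(t) = t²·X₁(t) and U(t) = t^n·g₁(X₁(t)), one has U(t)² = g₁(X₁(t))·g₁(X₂(t)). -/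
/-- A rational curve on the surface `u² = g₁(x₁)·g₁(x₂)`,
where `g₁(x) = x^n + a·x + b`. -/
theorem two_variable_parametrization_g1 (K : Type*) [Field K] (n : ℕ) (hn : 3 ≤ n)
    (a b : K) (hab : a * b ≠ 0) (t : K) (ht : t ^ (2 * n) - t ^ 2 ≠ 0) :
    let g₁ : K → K := fun x => x ^ n + a * x + b
    let X₁ : K := -(b / a) * ((t ^ (2 * n) - 1) / (t ^ (2 * n) - t ^ 2))
    let X₂ : K := t ^ 2 * X₁
    let U : K := t ^ n * g₁ X₁
    U ^ 2 = g₁ X₁ * g₁ X₂ := by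
  intro g₁ X₁ X₂ U
  have ha : a ≠ 0 := fun h => hab (by simp [h])
  have hlin : a * X₁ * (t ^ (2 * n) - t ^ 2) + b * (t ^ (2 * n) - 1) = 0 := by
    show a * (-(b / a) * ((t ^ (2 * n) - 1) / (t ^ (2 * n) - t ^ 2))) *
        (t ^ (2 * n) - t ^ 2) + b * (t ^ (2 * n) - 1) = 0
    field_simp
    ring
  have hpow : X₂ ^ n = t ^ (2 * n) * X₁ ^ n := by
    show (t ^ 2 * X₁) ^ n = _
    rw [mul_pow, ← pow_mul]
  have key : t ^ (2 * n) * g₁ X₁ = g₁ X₂ := by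
    show t ^ (2 * n) * (X₁ ^ n + a * X₁ + b) = X₂ ^ n + a * X₂ + b
    rw [hpow]
    show _ = t ^ (2 * n) * X₁ ^ n + a * (t ^ 2 * X₁) + b
    linear_combination hlin
  show (t ^ n * g₁ X₁) ^ 2 = g₁ X₁ * g₁ X₂
  rw [← key]
  ring
end

section
/- Let K be a field, let n ≥ 3 be an integer, and let a, b ∈ K with a·b ≠ 0. For every t ∈ K with t^{2(n−1)} − t² ≠ 0, setting X₁(t) = −(b/a)·(t^{2(n−1)} − 1)/(t^{2(n−1)} − t²), X₂(t) = t²·X₁(t) and U(t) = t^n·g₂(X₁(t)), one has U(t)² = g₂(X₁(t))·g₂(X₂(t)). -/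
/-- A rational curve on the surface `u² = g₂(x₁)·g₂(x₂)`,
where `g₂(x) = x^n + a·x² + b·x`. -/
theorem two_variable_parametrization_g2 (K : Type*) [Field K] (n : ℕ) (hn : 3 ≤ n)
    (a b : K) (hab : a * b ≠ 0) (t : K) (ht : t ^ (2 * (n - 1)) - t ^ 2 ≠ 0) :
    let g₂ : K → K := fun x => x ^ n + a * x ^ 2 + b * x
    let X₁ : K := -(b / a) * ((t ^ (2 * (n - 1)) - 1) / (t ^ (2 * (n - 1)) - t ^ 2))
    let X₂ : K := t ^ 2 * X₁
    let U : K := t ^ n * g₂ X₁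
    U ^ 2 = g₂ X₁ * g₂ X₂ := by
  have ha : a ≠ 0 := fun h => hab (by simp [h])
  have hb : b ≠ 0 := fun h => hab (by simp [h])
  obtain ⟨m, rfl⟩ : ∃ m, n = m + 3 := ⟨n - 3, by omega⟩
  simp only [show m + 3 - 1 = m + 2 from rfl] at ht ⊢
  set x : K := -(b / a) * ((t ^ (2 * (m + 2)) - 1) / (t ^ (2 * (m + 2)) - t ^ 2)) with hx
  clear_value x
  have hrel : a * x * (t ^ (2 * (m + 2)) - t ^ 2) + b * (t ^ (2 * (m + 2)) - 1) = 0 := by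
    rw [hx]; field_simp; ring
  have key : (t ^ 2 * x) ^ (m + 3) + a * (t ^ 2 * x) ^ 2 + b * (t ^ 2 * x)
      = t ^ (2 * (m + 3)) * (x ^ (m + 3) + a * x ^ 2 + b * x) := by
    linear_combination (-x * t ^ 2) * hrel
  rw [key]
  ring
end

section
/- Let K be a field, let n ≥ 3 be an odd integer, and let a, b ∈ K with a·b ≠ 0. For all t, u ∈ K such that g₁(u) ≠ 0 and t^{2n}·g₁(u)^{n−1} − t² ≠ 0, setting X₁(t,u) = u, X₂(t,u) = −(b/a)·(t^{2n}·g₁(u)^n − 1)/(g₁(u)·(t^{2n}·g₁(u)^{n−1} − t²)), X₃(t,u) = t²·g₁(u)·X₂(t,u) and U(t,u) = t^n·g₁(u)^{(n+1)/2}·g₁(X₂(t,u)), one has U(t,u)² = g₁(X₁(t,u))·g₁(X₂(t,u))·g₁(X₃(t,u)). -/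
private lemma aux_param (K : Type*) [Field K] (m : ℕ) (a b t G c : K) (ha : a ≠ 0)
    (hG : G ≠ 0) (ht : t ^ (2 * (2 * m + 1)) * G ^ (2 * m) - t ^ 2 ≠ 0)
    (hc : c = -(b / a) * ((t ^ (2 * (2 * m + 1)) * G ^ (2 * m + 1) - 1) /
      (G * (t ^ (2 * (2 * m + 1)) * G ^ (2 * m) - t ^ 2)))) :
    (t ^ (2 * m + 1) * G ^ (m + 1) * (c ^ (2 * m + 1) + a * c + b)) ^ 2 =
      G * (c ^ (2 * m + 1) + a * c + b) *
        ((t ^ 2 * G * c) ^ (2 * m + 1) + a * (t ^ 2 * G * c) + b) := by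
  have key : a * c * (t ^ 2 * G - t ^ (2 * (2 * m + 1)) * G ^ (2 * m + 1)) =
      b * (t ^ (2 * (2 * m + 1)) * G ^ (2 * m + 1) - 1) := by
    subst hc
    field_simp
    ring
  have hX3 : (t ^ 2 * G * c) ^ (2 * m + 1) + a * (t ^ 2 * G * c) + b =
      t ^ (2 * (2 * m + 1)) * G ^ (2 * m + 1) * (c ^ (2 * m + 1) + a * c + b) := by
    linear_combination key
  rw [hX3]
  ring

/-- A rational curve on the hypersurface `u² = g₁(x₁)·g₁(x₂)·g₁(x₃)`,
where `g₁(x) = x^n + a·x + b` and `n ≥ 3` is odd. -/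
theorem three_variable_parametrization_g1 (K : Type*) [Field K] (n : ℕ) (hn : 3 ≤ n)
    (hodd : Odd n) (a b : K) (hab : a * b ≠ 0) (t u : K)
    (hu : u ^ n + a * u + b ≠ 0)
    (ht : t ^ (2 * n) * (u ^ n + a * u + b) ^ (n - 1) - t ^ 2 ≠ 0) :
    let g₁ : K → K := fun x => x ^ n + a * x + b
    let X₁ : K := u
    let X₂ : K := -(b / a) *
      ((t ^ (2 * n) * g₁ u ^ n - 1) / (g₁ u * (t ^ (2 * n) * g₁ u ^ (n - 1) - t ^ 2)))
    let X₃ : K := t ^ 2 * g₁ u * X₂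
    let U : K := t ^ n * g₁ u ^ ((n + 1) / 2) * g₁ X₂
    U ^ 2 = g₁ X₁ * g₁ X₂ * g₁ X₃ := by
  intro g₁ X₁ X₂ X₃ U
  obtain ⟨m, rfl⟩ := hodd
  have ha : a ≠ 0 := left_ne_zero_of_mul hab
  have h2 : 2 * m + 1 - 1 = 2 * m := by omega
  have h1 : (2 * m + 1 + 1) / 2 = m + 1 := by omega
  rw [h2] at ht
  simp only [U, g₁, X₁, X₂, X₃, h1, h2]
  exact aux_param K m a b t _ _ ha hu ht rfl
end

section
/- Let K be a field, let n ≥ 3 be an odd integer, and let a, b ∈ K with a·b ≠ 0. For all t, u ∈ K such that g₂(u) ≠ 0 and t^{2(n−1)}·g₂(u)^{n−2} − t² ≠ 0, setting X₁(t,u) = u, X₂(t,u) = −(b/a)·(t^{2(n−1)}·g₂(u)^{n−1} − 1)/(g₂(u)·(t^{2(n−1)}·g₂(u)^{n−2} − t²)), X₃(t,u) = t²·g₂(u)·X₂(t,u) and U(t,u) = t^n·g₂(u)^{(n+1)/2}·g₂(X₂(t,u)), one has U(t,u)² = g₂(X₁(t,u))·g₂(X₂(t,u))·g₂(X₃(t,u)).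 -/
private lemma aux_div (K : Type*) [Field K] (a b g d N : K) (ha : a ≠ 0) (hg : g ≠ 0)
    (hd : d ≠ 0) : a * (-(b / a) * (N / (g * d))) * (g * d) = -(b * N) := by
  field_simp

/-- A rational curve on the hypersurface `u² = g₂(x₁)·g₂(x₂)·g₂(x₃)`,
where `g₂(x) = x^n + a·x² + b·x` and `n ≥ 3` is odd. -/
theorem three_variable_parametrization_g2 (K : Type*) [Field K] (n : ℕ) (hn : 3 ≤ n)
    (hodd : Odd n) (a b : K) (hab : a * b ≠ 0) (t u : K)
    (hu : u ^ n + a * u ^ 2 + b * u ≠ 0)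
    (ht : t ^ (2 * (n - 1)) * (u ^ n + a * u ^ 2 + b * u) ^ (n - 2) - t ^ 2 ≠ 0) :
    let g₂ : K → K := fun x => x ^ n + a * x ^ 2 + b * x
    let X₁ : K := u
    let X₂ : K := -(b / a) *
      ((t ^ (2 * (n - 1)) * g₂ u ^ (n - 1) - 1) /
        (g₂ u * (t ^ (2 * (n - 1)) * g₂ u ^ (n - 2) - t ^ 2)))
    let X₃ : K := t ^ 2 * g₂ u * X₂
    let U : K := t ^ n * g₂ u ^ ((n + 1) / 2) * g₂ X₂
    U ^ 2 = g₂ X₁ * g₂ X₂ * g₂ X₃ := by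
  have ha : a ≠ 0 := left_ne_zero_of_mul hab
  have hb : b ≠ 0 := right_ne_zero_of_mul hab
  obtain ⟨j, rfl⟩ : ∃ j, n = 2 * j + 3 := by
    obtain ⟨k, hk⟩ := hodd; exact ⟨k - 1, by omega⟩
  intro g₂ X₁ X₂ X₃ U
  have hg : ∀ x : K, g₂ x = x ^ (2*j+3) + a * x ^ 2 + b * x := fun x => rfl
  set G : K := u ^ (2*j+3) + a * u ^ 2 + b * u with hGdef
  have hgu : g₂ u = G := hGdef.symm
  rw [show 2 * (2*j+3-1) = 4*j+4 by omega, show 2*j+3-2 = 2*j+1 by omega] at ht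
  have hX₂ : X₂ = -(b / a) * ((t ^ (4*j+4) * G ^ (2*j+2) - 1) /
      (G * (t ^ (4*j+4) * G ^ (2*j+1) - t ^ 2))) := by
    show -(b / a) * ((t ^ (2*(2*j+3-1)) * g₂ u ^ (2*j+3-1) - 1) /
      (g₂ u * (t ^ (2*(2*j+3-1)) * g₂ u ^ (2*j+3-2) - t ^ 2))) = _
    rw [hgu, show 2*(2*j+3-1) = 4*j+4 by omega, show 2*j+3-1 = 2*j+2 by omega,
      show 2*j+3-2 = 2*j+1 by omega]
  have hX₃ : X₃ = t ^ 2 * G * X₂ := by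
    show t ^ 2 * g₂ u * X₂ = _; rw [hgu]
  have hU : U = t ^ (2*j+3) * G ^ (j+2) * g₂ X₂ := by
    show t ^ (2*j+3) * g₂ u ^ ((2*j+3+1)/2) * g₂ X₂ = _
    rw [hgu, show (2*j+3+1)/2 = j+2 by omega]
  have hX₁ : g₂ X₁ = G := hgu
  clear_value g₂ X₁ X₂ X₃ U G
  have key1 : a * X₂ * (G * (t ^ (4*j+4) * G ^ (2*j+1) - t ^ 2))
      = -(b * (t ^ (4*j+4) * G ^ (2*j+2) - 1)) := by
    rw [hX₂]
    exact aux_div K a b G (t ^ (4*j+4) * G ^ (2*j+1) - t ^ 2)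
      (t ^ (4*j+4) * G ^ (2*j+2) - 1) ha hu ht
  have key : g₂ X₃ = t ^ (2*(2*j+3)) * G ^ (2*j+3) * g₂ X₂ := by
    rw [hg, hg, hX₃]
    linear_combination (-(t ^ 2 * G * X₂)) * key1
  rw [hU, hX₁, key]
  ring
end

section
/- Let K be a field and let g be a polynomial over K of degree n that is reciprocal, i.e. x^n·g(1/x) = g(x) for all x ∈ K with x ≠ 0. Then for every t ∈ K with t ≠ 0, setting x₁ = t², x₂ = 1/t² and u = t^n·g(1/t²), one has u² = g(x₁)·g(x₂). (This exhibits a rational curve on the surface S₂ : u² = g(x₁)·g(x₂).) -/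
open Polynomial

/-- If `g` is a reciprocal polynomial of degree `n`, then
`x₁ = t², x₂ = 1/t², u = t^n·g(1/t²)` gives a rational curve on the surface
`S₂ : u² = g(x₁)·g(x₂)`. -/
theorem reciprocal_curve_on_S2 (K : Type*) [Field K] (n : ℕ) (g : K[X])
    (hdeg : g.natDegree = n)
    (hrec : ∀ x : K, x ≠ 0 → x ^ n * g.eval (1 / x) = g.eval x)
    (t : K) (ht : t ≠ 0) :
    let x₁ : K := t ^ 2
    let x₂ : K := 1 / t ^ 2
    let u : K := t ^ n * g.eval (1 / t ^ 2)
    u ^ 2 = g.eval x₁ * g.eval x₂ := by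
  intro x₁ x₂ u
  have h := hrec (t ^ 2) (pow_ne_zero 2 ht)
  show (t ^ n * g.eval (1 / t ^ 2)) ^ 2 = g.eval (t ^ 2) * g.eval (1 / t ^ 2)
  rw [← h]
  ring
end

section
/- Let K be a field and let g be a polynomial over K of odd degree n that is reciprocal, i.e. x^n·g(1/x) = g(x) for all x ∈ K with x ≠ 0. Then for every t ∈ K with g(t) ≠ 0, setting x₁ = t, x₂ = g(t), x₃ = 1/g(t) and u = g(t)^{(n+1)/2}·g(1/g(t)), one has u² = g(x₁)·g(x₂)·g(x₃). (This exhibits a rational curve on the surface S₃ : u² = g(x₁)·g(x₂)·g(x₃).) -/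
open Polynomial

/-- If `g` is a reciprocal polynomial of odd degree `n`, then
`x₁ = t, x₂ = g(t), x₃ = 1/g(t), u = g(t)^{(n+1)/2}·g(1/g(t))` gives a rational
curve on the surface `S₃ : u² = g(x₁)·g(x₂)·g(x₃)`. -/
theorem reciprocal_curve_on_S3 (K : Type*) [Field K] (n : ℕ) (hodd : Odd n) (g : K[X])
    (hdeg : g.natDegree = n)
    (hrec : ∀ x : K, x ≠ 0 → x ^ n * g.eval (1 / x) = g.eval x)
    (t : K) (ht : g.eval t ≠ 0) :
    let x₁ : K := t
    let x₂ : K := g.eval t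
    let x₃ : K := 1 / g.eval t
    let u : K := g.eval t ^ ((n + 1) / 2) * g.eval (1 / g.eval t)
    u ^ 2 = g.eval x₁ * g.eval x₂ * g.eval x₃ := by
  intro x₁ x₂ x₃ u
  have hgg := hrec (g.eval t) ht
  obtain ⟨k, hk⟩ := hodd
  have hn : (n + 1) / 2 = k + 1 := by omega
  show (g.eval t ^ ((n + 1) / 2) * g.eval (1 / g.eval t)) ^ 2
      = g.eval t * g.eval (g.eval t) * g.eval (1 / g.eval t)
  rw [← hgg, hn, hk]
  ring
end

section
/- Let K be a field, let a, b ∈ K with a·b ≠ 0, set f(x) = x³ + a·x + b, and fix u ∈ K with f(u) ≠ 0. Consider the rational functions from the three-variable parametrization with n = 3: X₁(t) = u, X₂(t) = −(b/a)·(t⁶·f(u)³ − 1)/(f(u)·(t⁶·f(u)² − t²)), X₃(t) = t²·f(u)·X₂(t). Then the product X₁(t)·X₂(t)·X₃(t), written as N(t)/D(t) with N, D ∈ K[t] relatively prime, satisfies deg N ≤ 8 and deg D ≤ 6. -/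
/-!
With `w = f(u)·t²` one has `t⁶f(u)³ - 1 = w³ - 1` and `f(u)·(t⁶f(u)² - t²) = w(w² - 1)`, so
the common factor `w - 1`, nonzero because `w` vanishes at `t = 0`, cancels from the quotient
defining `X₂`, leaving `(w² + w + 1) / (w(w + 1))`. Hence
`X₁X₂X₃ = u·(b/a)²·(w² + w + 1)² / (w(w + 1)²)`, a quotient of polynomials in `t` of degrees
at most `8` and `6`, and the reduced numerator and denominator divide these.
-/

open Polynomial

namespace RatFunc

variable {K : Type*} [Field K]

theorem natDegree_num_div_le (p q : K[X]) :
    (algebraMap K[X] (RatFunc K) p / algebraMap K[X] (RatFunc K) q).num.natDegree ≤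
      p.natDegree := by
  rcases eq_or_ne p 0 with rfl | hp
  · simp
  rcases eq_or_ne q 0 with rfl | hq
  · simp
  exact natDegree_le_of_dvd (num_div_dvd p hq) hp

theorem natDegree_denom_div_le (p q : K[X]) :
    (algebraMap K[X] (RatFunc K) p / algebraMap K[X] (RatFunc K) q).denom.natDegree ≤
      q.natDegree := by
  rcases eq_or_ne q 0 with rfl | hq
  · simp
  exact natDegree_le_of_dvd (denom_div_dvd p q) hq

end RatFunc

section Field

variable {F : Type*} [Field F]

theorem cube_sub_one_div_mul_sq_sub_one {w : F} (hw : w ≠ 1) :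
    (w ^ 3 - 1) / (w * (w ^ 2 - 1)) = (w ^ 2 + w + 1) / (w * (w + 1)) := by
  have hw' : w - 1 ≠ 0 := sub_ne_zero.mpr hw
  calc (w ^ 3 - 1) / (w * (w ^ 2 - 1))
      = ((w - 1) * (w ^ 2 + w + 1)) / ((w - 1) * (w * (w + 1))) := by ring_nf
    _ = (w ^ 2 + w + 1) / (w * (w + 1)) := mul_div_mul_left _ _ hw'

theorem parametrization_product_eq (u k c t : F) (h : c * t ^ 2 ≠ 1) :
    u * (-k * ((t ^ 6 * c ^ 3 - 1) / (c * (t ^ 6 * c ^ 2 - t ^ 2)))) *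
        (t ^ 2 * c * (-k * ((t ^ 6 * c ^ 3 - 1) / (c * (t ^ 6 * c ^ 2 - t ^ 2))))) =
      u * k ^ 2 * ((c * t ^ 2) ^ 2 + c * t ^ 2 + 1) ^ 2 /
        (c * t ^ 2 * (c * t ^ 2 + 1) ^ 2) := by
  set w := c * t ^ 2
  have hquot : (t ^ 6 * c ^ 3 - 1) / (c * (t ^ 6 * c ^ 2 - t ^ 2)) =
      (w ^ 2 + w + 1) / (w * (w + 1)) := by
    rw [← cube_sub_one_div_mul_sq_sub_one h]
    ring
  rw [hquot]
  rcases eq_or_ne w 0 with hw | hw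
  · simp [show t ^ 2 * c = w by ring, hw]
  rcases eq_or_ne (w + 1) 0 with hw1 | hw1
  · simp [hw1]
  field_simp
  ring

end Field

theorem product_degree_bound_general (K : Type*) [Field K] (a b : K) (u : K) :
    let f : K → K := fun x => x ^ 3 + a * x + b
    let T : RatFunc K := RatFunc.X
    let X₁ : RatFunc K := RatFunc.C u
    let X₂ : RatFunc K := -(RatFunc.C (b / a)) *
      ((T ^ 6 * RatFunc.C (f u) ^ 3 - 1) /
        (RatFunc.C (f u) * (T ^ 6 * RatFunc.C (f u) ^ 2 - T ^ 2)))
    let X₃ : RatFunc K := T ^ 2 * RatFunc.C (f u) * X₂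
    (X₁ * X₂ * X₃).num.natDegree ≤ 8 ∧ (X₁ * X₂ * X₃).denom.natDegree ≤ 6 := by
  intro f T X₁ X₂ X₃
  set w : K[X] := C (f u) * X ^ 2 with hw
  have hw_ne_one : algebraMap K[X] (RatFunc K) w ≠ 1 := by
    rw [← map_one (algebraMap K[X] (RatFunc K)), (RatFunc.algebraMap_injective K).ne_iff]
    intro h
    simpa [w] using congrArg (eval 0) h
  have hprod : X₁ * X₂ * X₃ =
      algebraMap K[X] (RatFunc K) (C (u * (b / a) ^ 2) * (w ^ 2 + w + 1) ^ 2) /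
        algebraMap K[X] (RatFunc K) (w * (w + 1) ^ 2) := by
    simp only [hw, map_mul, map_add, map_pow, map_one, RatFunc.algebraMap_C,
      RatFunc.algebraMap_X] at hw_ne_one ⊢
    exact parametrization_product_eq _ _ _ _ hw_ne_one
  have hw_deg : w.natDegree ≤ 2 := natDegree_C_mul_X_pow_le _ _
  rw [hprod]
  exact ⟨(RatFunc.natDegree_num_div_le _ _).trans (by compute_degree; omega),
    (RatFunc.natDegree_denom_div_le _ _).trans (by compute_degree; omega)⟩

/-- For `f(x) = x³ + a·x + b` and fixed `u` with `f(u) ≠ 0`, the product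
`X₁·X₂·X₃` of the rational functions from the three-variable parametrization (case `n = 3`),
written in lowest terms `N/D`, satisfies `deg N ≤ 8` and `deg D ≤ 6`. -/
theorem product_degree_bound (K : Type*) [Field K] (a b : K) (hab : a * b ≠ 0)
    (u : K) (hu : u ^ 3 + a * u + b ≠ 0) :
    let f : K → K := fun x => x ^ 3 + a * x + b
    let T : RatFunc K := RatFunc.X
    let X₁ : RatFunc K := RatFunc.C u
    let X₂ : RatFunc K := -(RatFunc.C (b / a)) *
      ((T ^ 6 * RatFunc.C (f u) ^ 3 - 1) /
        (RatFunc.C (f u) * (T ^ 6 * RatFunc.C (f u) ^ 2 - T ^ 2)))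
    let X₃ : RatFunc K := T ^ 2 * RatFunc.C (f u) * X₂
    (X₁ * X₂ * X₃).num.natDegree ≤ 8 ∧ (X₁ * X₂ * X₃).denom.natDegree ≤ 6 :=
  product_degree_bound_general K a b u
end
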